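/- Let G be the presented group on generators x, y with relators x⁹, y³, and y x y⁻¹ x⁻⁴ (so G ≅ Z/9Z ⋊ Z/3Z of order 27, where conjugation by y sends x to x⁴), and let A = {x, x⁻¹, y, y⁻¹}, a finite symmetric generating set of G. Then the three-letter word x·y·x⁻¹ is geodesic over A, and consequently the geodesic language Geo(G, A) is not piecewise excluding. -/
import Mathlib


/-- `w` is a word over the alphabet `A`: every letter of `w` lies in `A`. -/
def IsWordOver {G : Type*} (A : Finset G) (w : List G) : Prop :=
  ∀ x ∈ w, x ∈ A

/-- `A` is a finite symmetric (inverse-closed) generating set of the group `G`. -/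
def IsSymmGen {G : Type*} [Group G] (A : Finset G) : Prop :=
  Subgroup.closure (A : Set G) = ⊤ ∧ ∀ a ∈ A, a⁻¹ ∈ A

/-- `w` is a geodesic word over `A`: no word over `A` of strictly smaller length
evaluates to the same element of `G`. -/
def IsGeodesic {G : Type*} [Group G] (A : Finset G) (w : List G) : Prop :=
  IsWordOver A w ∧
    ∀ v : List G, IsWordOver A v → v.prod = w.prod → w.length ≤ v.length

/-- The geodesic language of `G` over `A`. -/
def Geo {G : Type*} [Group G] (A : Finset G) : Set (List G) :=
  {w | IsGeodesic A w}

/-- A language `L` of words over `A` is piecewise excluding if there is a finite set `F`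
of words over `A` such that a word `w` over `A` lies in `L` iff no element of `F` is a
piecewise subword (i.e. a not-necessarily-contiguous subsequence) of `w`. -/
def PiecewiseExcluding {G : Type*} (A : Finset G) (L : Set (List G)) : Prop :=
  ∃ F : Finset (List G), (∀ u ∈ F, IsWordOver A u) ∧
    ∀ w : List G, IsWordOver A w → (w ∈ L ↔ ∀ u ∈ F, ¬ List.Sublist u w)

/-- The relators of `⟨x, y ∣ x⁹, y³, y x y⁻¹ x⁻⁴⟩ ≅ ℤ/9ℤ ⋊ ℤ/3ℤ`, with `x` the image
of `0` and `y` the image of `1`. -/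
def z9z3Rels : Set (FreeGroup (Fin 2)) :=
  {(FreeGroup.of 0) ^ 9, (FreeGroup.of 1) ^ 3,
   FreeGroup.of 1 * FreeGroup.of 0 * (FreeGroup.of 1)⁻¹ * ((FreeGroup.of 0) ^ 4)⁻¹}

/-- The group `⟨x, y ∣ x⁹, y³, y x y⁻¹ x⁻⁴⟩ ≅ ℤ/9ℤ ⋊ ℤ/3ℤ` of order 27. -/
abbrev Z9Z3 : Type := PresentedGroup z9z3Rels

noncomputable instance : DecidableEq Z9Z3 := Classical.decEq _

/-- The generating set `A = {x, x⁻¹, y, y⁻¹}`. -/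
noncomputable def z9z3GenSet : Finset Z9Z3 :=
  {PresentedGroup.of 0, (PresentedGroup.of 0)⁻¹,
   PresentedGroup.of 1, (PresentedGroup.of 1)⁻¹}

/-- Concrete model of `ℤ/9 ⋊ ℤ/3`. -/
@[ext] structure Kgrp where
  a : Fin 9
  b : Fin 3
deriving DecidableEq, Fintype

/-- `4 ^ b mod 9` -/
def Kgrp.tw : Fin 3 → Nat
  | 0 => 1 | 1 => 4 | 2 => 7

instance : Mul Kgrp :=
  ⟨fun p q => ⟨⟨(p.a.val + Kgrp.tw p.b * q.a.val) % 9, Nat.mod_lt _ (by norm_num)⟩,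
    ⟨(p.b.val + q.b.val) % 3, Nat.mod_lt _ (by norm_num)⟩⟩⟩
instance : One Kgrp := ⟨⟨0, 0⟩⟩
instance : Inv Kgrp :=
  ⟨fun p => ⟨⟨(Kgrp.tw (-p.b) * (9 - p.a.val)) % 9, Nat.mod_lt _ (by norm_num)⟩, -p.b⟩⟩

set_option maxHeartbeats 4000000 in
theorem Kgrp.massoc : ∀ p q r : Kgrp, p * q * r = p * (q * r) := by decide
theorem Kgrp.onemul : ∀ p : Kgrp, 1 * p = p := by decide
theorem Kgrp.mulone : ∀ p : Kgrp, p * 1 = p := by decide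
theorem Kgrp.invmul : ∀ p : Kgrp, p⁻¹ * p = 1 := by decide

instance : Group Kgrp where
  mul_assoc := Kgrp.massoc
  one_mul := Kgrp.onemul
  mul_one := Kgrp.mulone
  inv_mul_cancel := Kgrp.invmul

/-- The images of the generators in the concrete model. -/
def kf : Fin 2 → Kgrp := fun i => if i = 0 then ⟨1, 0⟩ else ⟨0, 1⟩

theorem kf_rels : ∀ r ∈ z9z3Rels, FreeGroup.lift kf r = 1 := by
  intro r hr
  rcases hr with h | h | h <;> subst h <;>
    simp only [map_pow, map_mul, map_inv, FreeGroup.lift_apply_of] <;> decide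

/-- The homomorphism from the presented group to the concrete model. -/
noncomputable def kphi : Z9Z3 →* Kgrp := PresentedGroup.toGroup kf_rels

theorem kphi_of (i : Fin 2) : kphi (PresentedGroup.of i) = kf i :=
  PresentedGroup.toGroup.of kf_rels

theorem mem_genset (a : Z9Z3) : a ∈ z9z3GenSet ↔
    a = PresentedGroup.of 0 ∨ a = (PresentedGroup.of 0)⁻¹ ∨
    a = PresentedGroup.of 1 ∨ a = (PresentedGroup.of 1)⁻¹ := by
  simp [z9z3GenSet]

theorem kphi_gen (a : Z9Z3) (ha : a ∈ z9z3GenSet) :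
    kphi a = ⟨1, 0⟩ ∨ kphi a = ⟨8, 0⟩ ∨ kphi a = ⟨0, 1⟩ ∨ kphi a = ⟨0, 2⟩ := by
  rw [mem_genset] at ha
  rcases ha with h | h | h | h <;> subst h <;>
    simp only [map_inv, kphi_of, kf] <;> decide

/-- Value of `x y x⁻¹` in the concrete model. -/
theorem kphi_word :
    kphi ([(PresentedGroup.of 0 : Z9Z3), PresentedGroup.of 1,
      (PresentedGroup.of 0)⁻¹].prod) = ⟨6, 1⟩ := by
  simp only [List.prod_cons, List.prod_nil, map_mul, map_inv, map_one, kphi_of, kf]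
  decide

theorem short_words (v : List Z9Z3) (hv : IsWordOver z9z3GenSet v)
    (hlen : v.length ≤ 2) : kphi v.prod ≠ ⟨6, 1⟩ := by
  rcases v with _ | ⟨a, _ | ⟨b, _ | ⟨c, t⟩⟩⟩
  · simp only [List.prod_nil, map_one]; decide
  · simp only [List.prod_cons, List.prod_nil, mul_one]
    rcases kphi_gen a (hv a (by simp)) with h | h | h | h <;> rw [h] <;> decide
  · simp only [List.prod_cons, List.prod_nil, mul_one, map_mul]
    rcases kphi_gen a (hv a (by simp)) with h | h | h | h <;>
      rcases kphi_gen b (hv b (by simp)) with h' | h' | h' | h' <;>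
        rw [h, h'] <;> decide
  · simp at hlen

/-- In `⟨x, y ∣ x⁹, y³, y x y⁻¹ x⁻⁴⟩` with `A = {x, x⁻¹, y, y⁻¹}`, the word `x·y·x⁻¹`
is geodesic, so the geodesic language is not piecewise excluding. -/
theorem z9z3_not_piecewise_excluding :
    IsSymmGen z9z3GenSet ∧
    IsGeodesic z9z3GenSet
      [(PresentedGroup.of 0 : Z9Z3), PresentedGroup.of 1, (PresentedGroup.of 0)⁻¹] ∧
    ¬ PiecewiseExcluding z9z3GenSet (Geo z9z3GenSet) := by
  have hgen : IsSymmGen z9z3GenSet := by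
    constructor
    · rw [eq_top_iff, ← PresentedGroup.closure_range_of z9z3Rels]
      apply Subgroup.closure_mono
      rintro _ ⟨i, rfl⟩
      fin_cases i <;> simp [mem_genset]
    · intro a ha
      rw [mem_genset] at ha ⊢
      rcases ha with h | h | h | h <;> subst h <;> simp
  have hgeo : IsGeodesic z9z3GenSet
      [(PresentedGroup.of 0 : Z9Z3), PresentedGroup.of 1, (PresentedGroup.of 0)⁻¹] := by
    constructor
    · intro g hg
      rw [mem_genset]
      simp only [List.mem_cons, List.not_mem_nil, or_false] at hg
      tauto
    · intro v hv hprod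
      by_contra hle
      push_neg at hle
      exact short_words v hv (by simp only [List.length_cons, List.length_nil] at hle; omega) (by rw [hprod]; exact kphi_word)
  refine ⟨hgen, hgeo, ?_⟩
  rintro ⟨F, hF, hiff⟩
  set w : List Z9Z3 := [(PresentedGroup.of 0 : Z9Z3), PresentedGroup.of 1,
    (PresentedGroup.of 0)⁻¹] with hw
  set v : List Z9Z3 := [(PresentedGroup.of 0 : Z9Z3), (PresentedGroup.of 0)⁻¹] with hvdef
  have hvword : IsWordOver z9z3GenSet v := by
    intro g hg
    rw [mem_genset]
    simp only [hvdef, List.mem_cons, List.not_mem_nil, or_false] at hg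
    tauto
  have hvnot : v ∉ Geo z9z3GenSet := by
    rintro ⟨-, hmin⟩
    have := hmin [] (by intro g hg; simp at hg) (by simp [hvdef])
    simp [hvdef] at this
  have hww : IsWordOver z9z3GenSet w := hgeo.1
  rw [hiff v hvword] at hvnot
  push_neg at hvnot
  obtain ⟨u, huF, huv⟩ := hvnot
  have huw : List.Sublist u w := huv.trans (by
    simp only [hw, hvdef]
    exact (List.sublist_cons_self _ _).cons_cons _ )
  exact (hiff w hww).mp hgeo u huF huw
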